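/- Proposition 3.8 (independence of global facts from certificates): Let Γ be any c-satisfiable boolean combination of formulas of the form k cert φ, and let Δ be any boolean combination of formulas of the form p ▷ q where neither p nor q contains a local name. Then Γ → Δ is c-valid if and only if Δ is c-valid. -/

import Mathlib

/-- Principal expressions over keys `K`, global names `G`, local names `N`. -/
inductive PExp (K G N : Type*) where
  | key : K → PExp K G N
  | glob : G → PExp K G N
  | loc : N → PExp K G N
  | s : PExp K G N → PExp K G N → PExp K G N

/-- Formulas of LLNC. -/
inductive Fml (K G N : Type*) where
  | bdto : PExp K G N → PExp K G N → Fml K G N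
  | cert : K → Fml K G N → Fml K G N
  | not : Fml K G N → Fml K G N
  | and : Fml K G N → Fml K G N → Fml K G N

/-- A world: an interpretation of global names and an assignment of
certificates to keys, with only finitely many certificates issued. -/
structure World (K G N : Type*) where
  beta : G → Set K
  certs : K → Set (Fml K G N)
  finite_certs : (⋃ k, certs k).Finite

variable {K G N : Type*}

/-- The interpretation of a principal expression relative to a world, a
local name assignment, and a key. -/
def interp (w : World K G N) (l : K → N → Set K) : PExp K G N → K → Set K
  | .key k', _ => {k'}
  | .glob g, _ => w.beta g
  | .loc n, k => l k n
  | .s p q, k => ⋃ k' ∈ interp w l p k, interp w l q k'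

/-- Satisfaction of a formula at a world, local name assignment, and key. -/
def Sat (w : World K G N) (l : K → N → Set K) (k : K) : Fml K G N → Prop
  | .bdto p q => interp w l q k ⊆ interp w l p k
  | .cert k' φ => φ ∈ w.certs k'
  | .not φ => ¬ Sat w l k φ
  | .and φ ψ => Sat w l k φ ∧ Sat w l k ψ

/-- A local name assignment is consistent with a world if every issued
binding certificate holds at the issuer. -/
def Consistent (w : World K G N) (l : K → N → Set K) : Prop :=
  ∀ (k : K) (n : N) (p : PExp K G N),
    Fml.bdto (.loc n) p ∈ w.certs k → Sat w l k (.bdto (.loc n) p)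

/-- `lw` is the (unique) minimal local name assignment consistent with `w`. -/
def IsMinConsistent (w : World K G N) (lw : K → N → Set K) : Prop :=
  Consistent w lw ∧ ∀ l, Consistent w l → ∀ (k : K) (n : N), lw k n ⊆ l k n

/-- Open-semantics satisfaction: satisfaction with a consistent assignment. -/
def OSat (w : World K G N) (l : K → N → Set K) (k : K) (φ : Fml K G N) : Prop :=
  Sat w l k φ ∧ Consistent w l

/-- `φ` is o-satisfiable. -/
def OSatisfiable (φ : Fml K G N) : Prop :=
  ∃ (w : World K G N) (l : K → N → Set K) (k : K), OSat w l k φ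

/-- `φ` is o-valid: no triple satisfies `¬φ` under the open semantics. -/
def OValid (φ : Fml K G N) : Prop :=
  ¬ ∃ (w : World K G N) (l : K → N → Set K) (k : K), OSat w l k (.not φ)

/-- `φ` is c-satisfiable: some world and key satisfy it under the minimal
consistent local name assignment of the world. -/
def CSatisfiable (φ : Fml K G N) : Prop :=
  ∃ (w : World K G N) (k : K) (lw : K → N → Set K), IsMinConsistent w lw ∧ Sat w lw k φ

/-- `φ` is c-valid: every world and key satisfy it under the minimal
consistent local name assignment of the world. -/
def CValid (φ : Fml K G N) : Prop :=
  ∀ (w : World K G N) (k : K) (lw : K → N → Set K), IsMinConsistent w lw → Sat w lw k φ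

/-- Material implication, as a classical abbreviation. -/
def Fml.imp (φ ψ : Fml K G N) : Fml K G N := .not (.and φ (.not ψ))

/-- Boolean combinations (via `¬` and `∧`) of formulas satisfying `A`. -/
inductive BoolComb (A : Fml K G N → Prop) : Fml K G N → Prop
  | base {φ : Fml K G N} : A φ → BoolComb A φ
  | not {φ : Fml K G N} : BoolComb A φ → BoolComb A (.not φ)
  | and {φ ψ : Fml K G N} : BoolComb A φ → BoolComb A ψ → BoolComb A (.and φ ψ)

/-- A formula of the form `k cert φ`. -/
def IsCertFml : Fml K G N → Prop
  | .cert _ _ => True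
  | _ => False

/-- A principal expression containing no local names. -/
def PExp.NoLocal : PExp K G N → Prop
  | .key _ => True
  | .glob _ => True
  | .loc _ => False
  | .s p q => p.NoLocal ∧ q.NoLocal

/-- A formula `p ▷ q` where neither `p` nor `q` contains a local name. -/
def IsGlobalBdto : Fml K G N → Prop
  | .bdto p q => p.NoLocal ∧ q.NoLocal
  | _ => False

/-! A boolean combination of certificate formulas only sees the certificates of a world, and one of
local-name-free `▷`-formulas only sees the interpretation `β` of global names. So if `Δ` fails at
some `(w, k)`, keep `β` from `w` and take the certificates of a world satisfying `Γ`: the resulting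
world satisfies `Γ` but not `Δ`. -/

lemma interp_mono (w : World K G N) {l l' : K → N → Set K} (h : ∀ k n, l k n ⊆ l' k n)
    (p : PExp K G N) (k : K) : interp w l p k ⊆ interp w l' p k := by
  induction p generalizing k with
  | key | glob => exact subset_rfl
  | loc n => exact h k n
  | s p q ihp ihq => exact Set.biUnion_mono (ihp k) fun k' _ => ihq k'

lemma exists_isMinConsistent (w : World K G N) : ∃ lw, IsMinConsistent w lw := by
  let lw : K → N → Set K := fun k n => ⋂ l ∈ {l | Consistent w l}, l k n
  have lw_le : ∀ l, Consistent w l → ∀ k n, lw k n ⊆ l k n := fun l hl _ _ =>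
    Set.biInter_subset_of_mem hl
  refine ⟨lw, fun k n p hp => ?_, lw_le⟩
  exact Set.subset_iInter₂ fun l hl => (interp_mono w (lw_le l hl) p k).trans (hl k n p hp)

lemma sat_imp {w : World K G N} {l : K → N → Set K} {k : K} {φ ψ : Fml K G N} :
    Sat w l k (φ.imp ψ) ↔ (Sat w l k φ → Sat w l k ψ) := by
  simp only [Fml.imp, Sat, not_and, not_not]

lemma BoolComb.sat_iff_of_certs_eq {Γ : Fml K G N} (hΓ : BoolComb IsCertFml Γ)
    {w w' : World K G N} (hc : w.certs = w'.certs) (l l' : K → N → Set K) (k k' : K) :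
    Sat w l k Γ ↔ Sat w' l' k' Γ := by
  induction hΓ with
  | @base φ hφ => cases φ <;> simp_all [IsCertFml, Sat]
  | not _ ih => exact ih.not
  | and _ _ ih₁ ih₂ => exact and_congr ih₁ ih₂

lemma PExp.NoLocal.interp_eq {p : PExp K G N} (hp : p.NoLocal) {w w' : World K G N}
    (hb : w.beta = w'.beta) (l l' : K → N → Set K) (k : K) :
    interp w l p k = interp w' l' p k := by
  induction p generalizing k with
  | key => rfl
  | glob g => simp only [interp, hb]
  | loc => exact hp.elim
  | s p q ihp ihq => simp only [interp, ihp hp.1, ihq hp.2]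

lemma BoolComb.sat_iff_of_beta_eq {Δ : Fml K G N} (hΔ : BoolComb IsGlobalBdto Δ)
    {w w' : World K G N} (hb : w.beta = w'.beta) (l l' : K → N → Set K) (k : K) :
    Sat w l k Δ ↔ Sat w' l' k Δ := by
  induction hΔ with
  | @base φ hφ =>
    cases φ with
    | bdto p q => simp only [Sat, hφ.1.interp_eq hb l l', hφ.2.interp_eq hb l l']
    | _ => exact hφ.elim
  | not _ ih => exact ih.not
  | and _ _ ih₁ ih₂ => exact and_congr ih₁ ih₂

def World.withCertsOf (w w' : World K G N) : World K G N :=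
  { w' with beta := w.beta }

theorem global_facts_independent_general (Γ Δ : Fml K G N)
    (hΓ : BoolComb IsCertFml Γ) (hΓsat : CSatisfiable Γ)
    (hΔ : BoolComb IsGlobalBdto Δ) :
    CValid (Γ.imp Δ) ↔ CValid Δ := by
  refine ⟨fun h w k lw _ => ?_, fun h w k lw hlw => sat_imp.mpr fun _ => h w k lw hlw⟩
  obtain ⟨w', k', lw', -, hΓw'⟩ := hΓsat
  obtain ⟨l, hl⟩ := exists_isMinConsistent (w.withCertsOf w')
  have hΓ_mixed : Sat (w.withCertsOf w') l k Γ :=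
    (hΓ.sat_iff_of_certs_eq (w := w') (w' := w.withCertsOf w') rfl lw' l k' k).mp hΓw'
  have hΔ_mixed : Sat (w.withCertsOf w') l k Δ := sat_imp.mp (h _ k l hl) hΓ_mixed
  exact (hΔ.sat_iff_of_beta_eq (w := w.withCertsOf w') (w' := w) rfl l lw k).mp hΔ_mixed

/-- Proposition 3.8: facts about global names are independent of
certificates: for c-satisfiable boolean combinations `Γ` of `cert`-formulas and
boolean combinations `Δ` of local-name-free `▷`-formulas, `Γ → Δ` is c-valid
iff `Δ` is. -/
theorem global_facts_independent [Nonempty K] (Γ Δ : Fml K G N)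
    (hΓ : BoolComb IsCertFml Γ) (hΓsat : CSatisfiable Γ)
    (hΔ : BoolComb IsGlobalBdto Δ) :
    CValid (Γ.imp Δ) ↔ CValid Δ :=
  global_facts_independent_general Γ Δ hΓ hΓsat hΔ
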